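/- Let c be an integer and S_c = ℚ[a,b]/(b⁶, a⁴ − 7c²·a²b² − 6c³·ab³). Let P̃ = (1−b²)⁶·((1+a)⁴ − 7c²b²(1+a)² − 6c³b³(1+a))·((1−a)⁴ − 7c²b²(1−a)² + 6c³b³(1−a)) ∈ S_c and for each i let p_i = (−1)ⁱ times the homogeneous degree-2i component of P̃ (with deg a = deg b = 1). Then p₄ = 288c³ · a³b⁵ in S_c. (Equivalently: the Pontryagin number p₄[Y¹⁶_c] equals 288c³.) -/
import Mathlib

open MvPolynomial

namespace HW8

noncomputable def a : MvPolynomial (Fin 2) ℚ := X 0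
noncomputable def b : MvPolynomial (Fin 2) ℚ := X 1

noncomputable def I (c : ℤ) : Ideal (MvPolynomial (Fin 2) ℚ) :=
  Ideal.span {b ^ 6, a ^ 4 - C (7 * (c : ℚ) ^ 2) * (a ^ 2 * b ^ 2) - C (6 * (c : ℚ) ^ 3) * (a * b ^ 3)}

noncomputable def Pt (c : ℤ) : MvPolynomial (Fin 2) ℚ :=
  (1 - b ^ 2) ^ 6 *
    ((1 + a) ^ 4 - C (7 * (c : ℚ) ^ 2) * b ^ 2 * (1 + a) ^ 2 - C (6 * (c : ℚ) ^ 3) * b ^ 3 * (1 + a)) *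
    ((1 - a) ^ 4 - C (7 * (c : ℚ) ^ 2) * b ^ 2 * (1 - a) ^ 2 + C (6 * (c : ℚ) ^ 3) * b ^ 3 * (1 - a))

/-- `p c i` is `(-1)^i` times the homogeneous degree-`2*i` component of `Pt c`
(with `deg a = deg b = 1`), i.e. the `i`-th Pontryagin class. -/
noncomputable def p (c : ℤ) (i : ℕ) : MvPolynomial (Fin 2) ℚ :=
  ((-1 : ℚ) ^ i) • homogeneousComponent (2 * i) (Pt c)

lemma mono_hom (r : ℚ) (m n k : ℕ) (h : m + n = k) :
    ((C r : MvPolynomial (Fin 2) ℚ) * (a ^ m * b ^ n)).IsHomogeneous k := by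
  subst h
  simpa [a, b] using ((isHomogeneous_C (Fin 2) r).mul
    (((isHomogeneous_X ℚ (0 : Fin 2)).pow m).mul ((isHomogeneous_X ℚ (1 : Fin 2)).pow n)))

noncomputable def Q0 (c : ℤ) : MvPolynomial (Fin 2) ℚ :=
  C ((1 : ℚ) * (c : ℚ) ^ 0) * (a ^ 0 * b ^ 0)

lemma hQ0 (c : ℤ) : (Q0 c).IsHomogeneous 0 := by
  unfold Q0
  exact mono_hom _ 0 0 0 (by norm_num)

noncomputable def Q2 (c : ℤ) : MvPolynomial (Fin 2) ℚ :=
  C ((-6 : ℚ) * (c : ℚ) ^ 0) * (a ^ 0 * b ^ 2) + C ((-4 : ℚ) * (c : ℚ) ^ 0) * (a ^ 2 * b ^ 0) + C ((-14 : ℚ) * (c : ℚ) ^ 2) * (a ^ 0 * b ^ 2)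

lemma hQ2 (c : ℤ) : (Q2 c).IsHomogeneous 2 := by
  unfold Q2
  exact ((mono_hom _ 0 2 2 (by norm_num)).add (mono_hom _ 2 0 2 (by norm_num))).add (mono_hom _ 0 2 2 (by norm_num))

noncomputable def Q4 (c : ℤ) : MvPolynomial (Fin 2) ℚ :=
  C ((15 : ℚ) * (c : ℚ) ^ 0) * (a ^ 0 * b ^ 4) + C ((24 : ℚ) * (c : ℚ) ^ 0) * (a ^ 2 * b ^ 2) + C ((6 : ℚ) * (c : ℚ) ^ 0) * (a ^ 4 * b ^ 0) + C ((84 : ℚ) * (c : ℚ) ^ 2) * (a ^ 0 * b ^ 4) + C ((14 : ℚ) * (c : ℚ) ^ 2) * (a ^ 2 * b ^ 2) + C ((36 : ℚ) * (c : ℚ) ^ 3) * (a ^ 1 * b ^ 3) + C ((49 : ℚ) * (c : ℚ) ^ 4) * (a ^ 0 * b ^ 4)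

lemma hQ4 (c : ℤ) : (Q4 c).IsHomogeneous 4 := by
  unfold Q4
  exact ((((((mono_hom _ 0 4 4 (by norm_num)).add (mono_hom _ 2 2 4 (by norm_num))).add (mono_hom _ 4 0 4 (by norm_num))).add (mono_hom _ 0 4 4 (by norm_num))).add (mono_hom _ 2 2 4 (by norm_num))).add (mono_hom _ 1 3 4 (by norm_num))).add (mono_hom _ 0 4 4 (by norm_num))

noncomputable def Q6 (c : ℤ) : MvPolynomial (Fin 2) ℚ :=
  C ((-20 : ℚ) * (c : ℚ) ^ 0) * (a ^ 0 * b ^ 6) + C ((-60 : ℚ) * (c : ℚ) ^ 0) * (a ^ 2 * b ^ 4) + C ((-36 : ℚ) * (c : ℚ) ^ 0) * (a ^ 4 * b ^ 2) + C ((-4 : ℚ) * (c : ℚ) ^ 0) * (a ^ 6 * b ^ 0) + C ((-210 : ℚ) * (c : ℚ) ^ 2) * (a ^ 0 * b ^ 6) + C ((-84 : ℚ) * (c : ℚ) ^ 2) * (a ^ 2 * b ^ 4) + C ((14 : ℚ) * (c : ℚ) ^ 2) * (a ^ 4 * b ^ 2) + C ((-216 : ℚ) * (c : ℚ) ^ 3)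 * (a ^ 1 * b ^ 5) + C ((-24 : ℚ) * (c : ℚ) ^ 3) * (a ^ 3 * b ^ 3) + C ((-294 : ℚ) * (c : ℚ) ^ 4) * (a ^ 0 * b ^ 6) + C ((-98 : ℚ) * (c : ℚ) ^ 4) * (a ^ 2 * b ^ 4) + C ((-84 : ℚ) * (c : ℚ) ^ 5) * (a ^ 1 * b ^ 5) + C ((-36 : ℚ) * (c : ℚ) ^ 6) * (a ^ 0 * b ^ 6)

lemma hQ6 (c : ℤ) : (Q6 c).IsHomogeneous 6 := by
  unfold Q6
  exact ((((((((((((mono_hom _ 0 6 6 (by norm_num)).add (mono_hom _ 2 4 6 (by norm_num))).add (mono_hom _ 4 2 6 (by norm_num))).add (mono_hom _ 6 0 6 (by norm_num))).add (mono_hom _ 0 6 6 (by norm_num))).add (mono_hom _ 2 4 6 (by norm_num))).add (mono_hom _ 4 2 6 (by norm_num))).add (mono_hom _ 1 5 6 (by norm_num))).add (mono_hom _ 3 3 6 (by norm_num))).add (mono_hom _ 0 6 6 (by norm_num))).add (mono_hom _ 2 4 6 (by norm_num))).add (mono_hom _ 1 5 6 (by norm_num))).add (mono_hom _ 0 6 6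 (by norm_num))

noncomputable def Q8 (c : ℤ) : MvPolynomial (Fin 2) ℚ :=
  C ((15 : ℚ) * (c : ℚ) ^ 0) * (a ^ 0 * b ^ 8) + C ((80 : ℚ) * (c : ℚ) ^ 0) * (a ^ 2 * b ^ 6) + C ((90 : ℚ) * (c : ℚ) ^ 0) * (a ^ 4 * b ^ 4) + C ((24 : ℚ) * (c : ℚ) ^ 0) * (a ^ 6 * b ^ 2) + C ((1 : ℚ) * (c : ℚ) ^ 0) * (a ^ 8 * b ^ 0) + C ((280 : ℚ) * (c : ℚ) ^ 2) * (a ^ 0 * b ^ 8) + C ((210 : ℚ) * (c : ℚ) ^ 2) * (a ^ 2 * b ^ 6) + C ((-84 : ℚ) * (c : ℚ) ^ 2) * (a ^ 4 * b ^ 4) + C ((-14 : ℚ) * (c : ℚ) ^ 2) * (a ^ 6 * b ^ 2) + C ((540 : ℚ) * (c : ℚ) ^ 3) * (a ^ 1 * b ^ 7) + C ((144 : ℚ) * (c : ℚ) ^ 3) * (a ^ 3 * b ^ 5) + C ((-12 : ℚ) * (c : ℚ) ^ 3) * (a ^ 5 * b ^ 3) + C ((735 : ℚ) * (c : ℚ)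 ^ 4) * (a ^ 0 * b ^ 8) + C ((588 : ℚ) * (c : ℚ) ^ 4) * (a ^ 2 * b ^ 6) + C ((49 : ℚ) * (c : ℚ) ^ 4) * (a ^ 4 * b ^ 4) + C ((504 : ℚ) * (c : ℚ) ^ 5) * (a ^ 1 * b ^ 7) + C ((84 : ℚ) * (c : ℚ) ^ 5) * (a ^ 3 * b ^ 5) + C ((216 : ℚ) * (c : ℚ) ^ 6) * (a ^ 0 * b ^ 8) + C ((36 : ℚ) * (c : ℚ) ^ 6) * (a ^ 2 * b ^ 6)

lemma hQ8 (c : ℤ) : (Q8 c).IsHomogeneous 8 := by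
  unfold Q8
  exact ((((((((((((((((((mono_hom _ 0 8 8 (by norm_num)).add (mono_hom _ 2 6 8 (by norm_num))).add (mono_hom _ 4 4 8 (by norm_num))).add (mono_hom _ 6 2 8 (by norm_num))).add (mono_hom _ 8 0 8 (by norm_num))).add (mono_hom _ 0 8 8 (by norm_num))).add (mono_hom _ 2 6 8 (by norm_num))).add (mono_hom _ 4 4 8 (by norm_num))).add (mono_hom _ 6 2 8 (by norm_num))).add (mono_hom _ 1 7 8 (by norm_num))).add (mono_hom _ 3 5 8 (by norm_num))).add (mono_hom _ 5 3 8 (by norm_num))).add (mono_hom _ 0 8 8 (by norm_num))).add (mono_hom _ 2 6 8 (by norm_num))).add (mono_hom _ 4 4 8 (by norm_num))).add (mono_hom _ 1 7 8 (by norm_num))).add (mono_hom _ 3 5 8 (by norm_num))).add (mono_hom _ 0 8 8 (by norm_num))).add (mono_hom _ 2 6 8 (by norm_num))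

noncomputable def Q10 (c : ℤ) : MvPolynomial (Fin 2) ℚ :=
  C ((-6 : ℚ) * (c : ℚ) ^ 0) * (a ^ 0 * b ^ 10) + C ((-60 : ℚ) * (c : ℚ) ^ 0) * (a ^ 2 * b ^ 8) + C ((-120 : ℚ) * (c : ℚ) ^ 0) * (a ^ 4 * b ^ 6) + C ((-60 : ℚ) * (c : ℚ) ^ 0) * (a ^ 6 * b ^ 4) + C ((-6 : ℚ) * (c : ℚ) ^ 0) * (a ^ 8 * b ^ 2) + C ((-210 : ℚ) * (c : ℚ) ^ 2) * (a ^ 0 * b ^ 10) + C ((-280 : ℚ) * (c : ℚ) ^ 2) * (a ^ 2 * b ^ 8) + C ((210 : ℚ) * (c : ℚ) ^ 2) * (a ^ 4 * b ^ 6) + C ((84 : ℚ) * (c : ℚ) ^ 2) * (a ^ 6 * b ^ 4) + C ((-720 : ℚ) * (c : ℚ) ^ 3) * (a ^ 1 * b ^ 9) + C ((-360 : ℚ) * (c : ℚ) ^ 3) * (a ^ 3 * b ^ 7) + C ((72 : ℚ) * (c : ℚ) ^ 3) * (a ^ 5 * b ^ 5) + C ((-980 : ℚ) * (c : ℚ)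 ^ 4) * (a ^ 0 * b ^ 10) + C ((-1470 : ℚ) * (c : ℚ) ^ 4) * (a ^ 2 * b ^ 8) + C ((-294 : ℚ) * (c : ℚ) ^ 4) * (a ^ 4 * b ^ 6) + C ((-1260 : ℚ) * (c : ℚ) ^ 5) * (a ^ 1 * b ^ 9) + C ((-504 : ℚ) * (c : ℚ) ^ 5) * (a ^ 3 * b ^ 7) + C ((-540 : ℚ) * (c : ℚ) ^ 6) * (a ^ 0 * b ^ 10) + C ((-216 : ℚ) * (c : ℚ) ^ 6) * (a ^ 2 * b ^ 8)

lemma hQ10 (c : ℤ) : (Q10 c).IsHomogeneous 10 := by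
  unfold Q10
  exact ((((((((((((((((((mono_hom _ 0 10 10 (by norm_num)).add (mono_hom _ 2 8 10 (by norm_num))).add (mono_hom _ 4 6 10 (by norm_num))).add (mono_hom _ 6 4 10 (by norm_num))).add (mono_hom _ 8 2 10 (by norm_num))).add (mono_hom _ 0 10 10 (by norm_num))).add (mono_hom _ 2 8 10 (by norm_num))).add (mono_hom _ 4 6 10 (by norm_num))).add (mono_hom _ 6 4 10 (by norm_num))).add (mono_hom _ 1 9 10 (by norm_num))).add (mono_hom _ 3 7 10 (by norm_num))).add (mono_hom _ 5 5 10 (by norm_num))).add (mono_hom _ 0 10 10 (by norm_num))).add (mono_hom _ 2 8 10 (by norm_num))).add (mono_hom _ 4 6 10 (by norm_num))).add (mono_hom _ 1 9 10 (by norm_num))).add (mono_hom _ 3 7 10 (by norm_num))).add (mono_hom _ 0 10 10 (by norm_num))).add (mono_hom _ 2 8 10 (by norm_num))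

noncomputable def Q12 (c : ℤ) : MvPolynomial (Fin 2) ℚ :=
  C ((1 : ℚ) * (c : ℚ) ^ 0) * (a ^ 0 * b ^ 12) + C ((24 : ℚ) * (c : ℚ) ^ 0) * (a ^ 2 * b ^ 10) + C ((90 : ℚ) * (c : ℚ) ^ 0) * (a ^ 4 * b ^ 8) + C ((80 : ℚ) * (c : ℚ) ^ 0) * (a ^ 6 * b ^ 6) + C ((15 : ℚ) * (c : ℚ) ^ 0) * (a ^ 8 * b ^ 4) + C ((84 : ℚ) * (c : ℚ) ^ 2) * (a ^ 0 * b ^ 12) + C ((210 : ℚ) * (c : ℚ) ^ 2) * (a ^ 2 * b ^ 10) + C ((-280 : ℚ) * (c : ℚ) ^ 2) * (a ^ 4 * b ^ 8) + C ((-210 : ℚ) * (c : ℚ) ^ 2) * (a ^ 6 * b ^ 6) + C ((540 : ℚ) * (c : ℚ) ^ 3) * (a ^ 1 * b ^ 11) + C ((480 : ℚ) * (c : ℚ) ^ 3) * (a ^ 3 * b ^ 9) + C ((-180 : ℚ) * (c : ℚ) ^ 3) * (a ^ 5 * b ^ 7) + C ((735 : ℚ) * (c : ℚ) ^ 4) *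 (a ^ 0 * b ^ 12) + C ((1960 : ℚ) * (c : ℚ) ^ 4) * (a ^ 2 * b ^ 10) + C ((735 : ℚ) * (c : ℚ) ^ 4) * (a ^ 4 * b ^ 8) + C ((1680 : ℚ) * (c : ℚ) ^ 5) * (a ^ 1 * b ^ 11) + C ((1260 : ℚ) * (c : ℚ) ^ 5) * (a ^ 3 * b ^ 9) + C ((720 : ℚ) * (c : ℚ) ^ 6) * (a ^ 0 * b ^ 12) + C ((540 : ℚ) * (c : ℚ) ^ 6) * (a ^ 2 * b ^ 10)

lemma hQ12 (c : ℤ) : (Q12 c).IsHomogeneous 12 := by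
  unfold Q12
  exact ((((((((((((((((((mono_hom _ 0 12 12 (by norm_num)).add (mono_hom _ 2 10 12 (by norm_num))).add (mono_hom _ 4 8 12 (by norm_num))).add (mono_hom _ 6 6 12 (by norm_num))).add (mono_hom _ 8 4 12 (by norm_num))).add (mono_hom _ 0 12 12 (by norm_num))).add (mono_hom _ 2 10 12 (by norm_num))).add (mono_hom _ 4 8 12 (by norm_num))).add (mono_hom _ 6 6 12 (by norm_num))).add (mono_hom _ 1 11 12 (by norm_num))).add (mono_hom _ 3 9 12 (by norm_num))).add (mono_hom _ 5 7 12 (by norm_num))).add (mono_hom _ 0 12 12 (by norm_num))).add (mono_hom _ 2 10 12 (by norm_num))).add (mono_hom _ 4 8 12 (by norm_num))).add (mono_hom _ 1 11 12 (by norm_num))).add (mono_hom _ 3 9 12 (by norm_num))).add (mono_hom _ 0 12 12 (by norm_num))).add (mono_hom _ 2 10 12 (by norm_num))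

noncomputable def Q14 (c : ℤ) : MvPolynomial (Fin 2) ℚ :=
  C ((-4 : ℚ) * (c : ℚ) ^ 0) * (a ^ 2 * b ^ 12) + C ((-36 : ℚ) * (c : ℚ) ^ 0) * (a ^ 4 * b ^ 10) + C ((-60 : ℚ) * (c : ℚ) ^ 0) * (a ^ 6 * b ^ 8) + C ((-20 : ℚ) * (c : ℚ) ^ 0) * (a ^ 8 * b ^ 6) + C ((-14 : ℚ) * (c : ℚ) ^ 2) * (a ^ 0 * b ^ 14) + C ((-84 : ℚ) * (c : ℚ) ^ 2) * (a ^ 2 * b ^ 12) + C ((210 : ℚ) * (c : ℚ) ^ 2) * (a ^ 4 * b ^ 10) + C ((280 : ℚ) * (c : ℚ) ^ 2) * (a ^ 6 * b ^ 8) + C ((-216 : ℚ) * (c : ℚ) ^ 3) * (a ^ 1 * b ^ 13) + C ((-360 : ℚ) * (c : ℚ) ^ 3) * (a ^ 3 * b ^ 11) + C ((240 : ℚ) * (c : ℚ) ^ 3) * (a ^ 5 * b ^ 9) + C ((-294 : ℚ) * (c : ℚ) ^ 4) * (a ^ 0 * b ^ 14) + C ((-1470 : ℚ) * (c : ℚ)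 ^ 4) * (a ^ 2 * b ^ 12) + C ((-980 : ℚ) * (c : ℚ) ^ 4) * (a ^ 4 * b ^ 10) + C ((-1260 : ℚ) * (c : ℚ) ^ 5) * (a ^ 1 * b ^ 13) + C ((-1680 : ℚ) * (c : ℚ) ^ 5) * (a ^ 3 * b ^ 11) + C ((-540 : ℚ) * (c : ℚ) ^ 6) * (a ^ 0 * b ^ 14) + C ((-720 : ℚ) * (c : ℚ) ^ 6) * (a ^ 2 * b ^ 12)

lemma hQ14 (c : ℤ) : (Q14 c).IsHomogeneous 14 := by
  unfold Q14
  exact (((((((((((((((((mono_hom _ 2 12 14 (by norm_num)).add (mono_hom _ 4 10 14 (by norm_num))).add (mono_hom _ 6 8 14 (by norm_num))).add (mono_hom _ 8 6 14 (by norm_num))).add (mono_hom _ 0 14 14 (by norm_num))).add (mono_hom _ 2 12 14 (by norm_num))).add (mono_hom _ 4 10 14 (by norm_num))).add (mono_hom _ 6 8 14 (by norm_num))).add (mono_hom _ 1 13 14 (by norm_num))).add (mono_hom _ 3 11 14 (by norm_num))).add (mono_hom _ 5 9 14 (by norm_num))).add (mono_hom _ 0 14 14 (by norm_num))).add (mono_hom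 _ 2 12 14 (by norm_num))).add (mono_hom _ 4 10 14 (by norm_num))).add (mono_hom _ 1 13 14 (by norm_num))).add (mono_hom _ 3 11 14 (by norm_num))).add (mono_hom _ 0 14 14 (by norm_num))).add (mono_hom _ 2 12 14 (by norm_num))

noncomputable def Q16 (c : ℤ) : MvPolynomial (Fin 2) ℚ :=
  C ((6 : ℚ) * (c : ℚ) ^ 0) * (a ^ 4 * b ^ 12) + C ((24 : ℚ) * (c : ℚ) ^ 0) * (a ^ 6 * b ^ 10) + C ((15 : ℚ) * (c : ℚ) ^ 0) * (a ^ 8 * b ^ 8) + C ((14 : ℚ) * (c : ℚ) ^ 2) * (a ^ 2 * b ^ 14) + C ((-84 : ℚ) * (c : ℚ) ^ 2) * (a ^ 4 * b ^ 12) + C ((-210 : ℚ) * (c : ℚ) ^ 2) * (a ^ 6 * b ^ 10) + C ((36 : ℚ) * (c : ℚ) ^ 3) * (a ^ 1 * b ^ 15) + C ((144 : ℚ) * (c : ℚ) ^ 3) * (a ^ 3 * b ^ 13) + C ((-180 : ℚ) * (c : ℚ) ^ 3) * (a ^ 5 * b ^ 11) + C ((49 : ℚ) * (c : ℚ) ^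 4) * (a ^ 0 * b ^ 16) + C ((588 : ℚ) * (c : ℚ) ^ 4) * (a ^ 2 * b ^ 14) + C ((735 : ℚ) * (c : ℚ) ^ 4) * (a ^ 4 * b ^ 12) + C ((504 : ℚ) * (c : ℚ) ^ 5) * (a ^ 1 * b ^ 15) + C ((1260 : ℚ) * (c : ℚ) ^ 5) * (a ^ 3 * b ^ 13) + C ((216 : ℚ) * (c : ℚ) ^ 6) * (a ^ 0 * b ^ 16) + C ((540 : ℚ) * (c : ℚ) ^ 6) * (a ^ 2 * b ^ 14)

lemma hQ16 (c : ℤ) : (Q16 c).IsHomogeneous 16 := by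
  unfold Q16
  exact (((((((((((((((mono_hom _ 4 12 16 (by norm_num)).add (mono_hom _ 6 10 16 (by norm_num))).add (mono_hom _ 8 8 16 (by norm_num))).add (mono_hom _ 2 14 16 (by norm_num))).add (mono_hom _ 4 12 16 (by norm_num))).add (mono_hom _ 6 10 16 (by norm_num))).add (mono_hom _ 1 15 16 (by norm_num))).add (mono_hom _ 3 13 16 (by norm_num))).add (mono_hom _ 5 11 16 (by norm_num))).add (mono_hom _ 0 16 16 (by norm_num))).add (mono_hom _ 2 14 16 (by norm_num))).add (mono_hom _ 4 12 16 (by norm_num))).add (mono_hom _ 1 15 16 (by norm_num))).add (mono_hom _ 3 13 16 (by norm_num))).add (mono_hom _ 0 16 16 (by norm_num))).add (mono_hom _ 2 14 16 (by norm_num))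

noncomputable def Q18 (c : ℤ) : MvPolynomial (Fin 2) ℚ :=
  C ((-4 : ℚ) * (c : ℚ) ^ 0) * (a ^ 6 * b ^ 12) + C ((-6 : ℚ) * (c : ℚ) ^ 0) * (a ^ 8 * b ^ 10) + C ((14 : ℚ) * (c : ℚ) ^ 2) * (a ^ 4 * b ^ 14) + C ((84 : ℚ) * (c : ℚ) ^ 2) * (a ^ 6 * b ^ 12) + C ((-24 : ℚ) * (c : ℚ) ^ 3) * (a ^ 3 * b ^ 15) + C ((72 : ℚ) * (c : ℚ) ^ 3) * (a ^ 5 * b ^ 13) + C ((-98 : ℚ) * (c : ℚ) ^ 4) * (a ^ 2 * b ^ 16) + C ((-294 : ℚ) * (c : ℚ) ^ 4) * (a ^ 4 * b ^ 14) + C ((-84 : ℚ) * (c : ℚ) ^ 5) * (a ^ 1 * b ^ 17) + C ((-504 : ℚ) * (c : ℚ) ^ 5) * (a ^ 3 * b ^ 15) + C ((-36 : ℚ) * (c : ℚ) ^ 6) * (a ^ 0 * b ^ 18) + C ((-216 : ℚ) * (c : ℚ) ^ 6) * (a ^ 2 * b ^ 16)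

lemma hQ18 (c : ℤ) : (Q18 c).IsHomogeneous 18 := by
  unfold Q18
  exact (((((((((((mono_hom _ 6 12 18 (by norm_num)).add (mono_hom _ 8 10 18 (by norm_num))).add (mono_hom _ 4 14 18 (by norm_num))).add (mono_hom _ 6 12 18 (by norm_num))).add (mono_hom _ 3 15 18 (by norm_num))).add (mono_hom _ 5 13 18 (by norm_num))).add (mono_hom _ 2 16 18 (by norm_num))).add (mono_hom _ 4 14 18 (by norm_num))).add (mono_hom _ 1 17 18 (by norm_num))).add (mono_hom _ 3 15 18 (by norm_num))).add (mono_hom _ 0 18 18 (by norm_num))).add (mono_hom _ 2 16 18 (by norm_num))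

noncomputable def Q20 (c : ℤ) : MvPolynomial (Fin 2) ℚ :=
  C ((1 : ℚ) * (c : ℚ) ^ 0) * (a ^ 8 * b ^ 12) + C ((-14 : ℚ) * (c : ℚ) ^ 2) * (a ^ 6 * b ^ 14) + C ((-12 : ℚ) * (c : ℚ) ^ 3) * (a ^ 5 * b ^ 15) + C ((49 : ℚ) * (c : ℚ) ^ 4) * (a ^ 4 * b ^ 16) + C ((84 : ℚ) * (c : ℚ) ^ 5) * (a ^ 3 * b ^ 17) + C ((36 : ℚ) * (c : ℚ) ^ 6) * (a ^ 2 * b ^ 18)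

lemma hQ20 (c : ℤ) : (Q20 c).IsHomogeneous 20 := by
  unfold Q20
  exact (((((mono_hom _ 8 12 20 (by norm_num)).add (mono_hom _ 6 14 20 (by norm_num))).add (mono_hom _ 5 15 20 (by norm_num))).add (mono_hom _ 4 16 20 (by norm_num))).add (mono_hom _ 3 17 20 (by norm_num))).add (mono_hom _ 2 18 20 (by norm_num))

lemma hPt (c : ℤ) : Pt c = Q0 c + Q2 c + Q4 c + Q6 c + Q8 c + Q10 c + Q12 c + Q14 c + Q16 c + Q18 c + Q20 c := by
  simp only [Pt, Q0, Q2, Q4, Q6, Q8, Q10, Q12, Q14, Q16, Q18, Q20, map_mul, map_pow, map_neg, map_ofNat, map_one]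
  ring

lemma hc0 (c : ℤ) : homogeneousComponent 8 (Q0 c) = 0 := by
  have := homogeneousComponent_of_mem ((mem_homogeneousSubmodule _ _).2 (hQ0 c)) (m := 8)
  simpa using this

lemma hc2 (c : ℤ) : homogeneousComponent 8 (Q2 c) = 0 := by
  have := homogeneousComponent_of_mem ((mem_homogeneousSubmodule _ _).2 (hQ2 c)) (m := 8)
  simpa using this

lemma hc4 (c : ℤ) : homogeneousComponent 8 (Q4 c) = 0 := by
  have := homogeneousComponent_of_mem ((mem_homogeneousSubmodule _ _).2 (hQ4 c)) (m := 8)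
  simpa using this

lemma hc6 (c : ℤ) : homogeneousComponent 8 (Q6 c) = 0 := by
  have := homogeneousComponent_of_mem ((mem_homogeneousSubmodule _ _).2 (hQ6 c)) (m := 8)
  simpa using this

lemma hc8 (c : ℤ) : homogeneousComponent 8 (Q8 c) = Q8 c := by
  have := homogeneousComponent_of_mem ((mem_homogeneousSubmodule _ _).2 (hQ8 c)) (m := 8)
  simpa using this

lemma hc10 (c : ℤ) : homogeneousComponent 8 (Q10 c) = 0 := by
  have := homogeneousComponent_of_mem ((mem_homogeneousSubmodule _ _).2 (hQ10 c)) (m := 8)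
  simpa using this

lemma hc12 (c : ℤ) : homogeneousComponent 8 (Q12 c) = 0 := by
  have := homogeneousComponent_of_mem ((mem_homogeneousSubmodule _ _).2 (hQ12 c)) (m := 8)
  simpa using this

lemma hc14 (c : ℤ) : homogeneousComponent 8 (Q14 c) = 0 := by
  have := homogeneousComponent_of_mem ((mem_homogeneousSubmodule _ _).2 (hQ14 c)) (m := 8)
  simpa using this

lemma hc16 (c : ℤ) : homogeneousComponent 8 (Q16 c) = 0 := by
  have := homogeneousComponent_of_mem ((mem_homogeneousSubmodule _ _).2 (hQ16 c)) (m := 8)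
  simpa using this

lemma hc18 (c : ℤ) : homogeneousComponent 8 (Q18 c) = 0 := by
  have := homogeneousComponent_of_mem ((mem_homogeneousSubmodule _ _).2 (hQ18 c)) (m := 8)
  simpa using this

lemma hc20 (c : ℤ) : homogeneousComponent 8 (Q20 c) = 0 := by
  have := homogeneousComponent_of_mem ((mem_homogeneousSubmodule _ _).2 (hQ20 c)) (m := 8)
  simpa using this

lemma key (c : ℤ) : p c 4 = Q8 c := by
  have h : homogeneousComponent 8 (Pt c) = Q8 c := by
    rw [hPt]
    simp only [map_add, hc0, hc2, hc4, hc6, hc8, hc10, hc12, hc14, hc16, hc18, hc20]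
    ring
  rw [p, show (2*4 : ℕ) = 8 from rfl, h]
  norm_num

theorem pontryagin_number (c : ℤ) :
    Ideal.Quotient.mk (I c) (p c 4) =
      Ideal.Quotient.mk (I c) (C (288 * (c : ℚ) ^ 3) * (a ^ 3 * b ^ 5)) := by
  rw [Ideal.Quotient.eq, key, I]
  rw [Ideal.mem_span_pair]
  refine ⟨C ((15 : ℚ) * (c : ℚ) ^ 0) * (a ^ 0 * b ^ 2) + C ((80 : ℚ) * (c : ℚ) ^ 0) * (a ^ 2 * b ^ 0) + C ((280 : ℚ) * (c : ℚ) ^ 2) * (a ^ 0 * b ^ 2) + C ((840 : ℚ) * (c : ℚ) ^ 2) * (a ^ 2 * b ^ 0) + C ((1080 : ℚ) * (c : ℚ) ^ 3) * (a ^ 1 * b ^ 1) + C ((735 : ℚ) * (c : ℚ) ^ 4) * (a ^ 0 * b ^ 2) + C ((1176 : ℚ) * (c : ℚ) ^ 4) * (a ^ 2 * b ^ 0) + C ((1008 : ℚ) * (c : ℚ) ^ 5) * (a ^ 1 * b ^ 1) + C ((216 : ℚ) * (c : ℚ) ^ 6) * (a ^ 0 * b ^ 2),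
    C ((90 : ℚ) * (c : ℚ) ^ 0) * (a ^ 0 * b ^ 4) + C ((24 : ℚ) * (c : ℚ) ^ 0) * (a ^ 2 * b ^ 2) + C ((1 : ℚ) * (c : ℚ) ^ 0) * (a ^ 4 * b ^ 0) + C ((84 : ℚ) * (c : ℚ) ^ 2) * (a ^ 0 * b ^ 4) + C ((-7 : ℚ) * (c : ℚ) ^ 2) * (a ^ 2 * b ^ 2) + C ((-6 : ℚ) * (c : ℚ) ^ 3) * (a ^ 1 * b ^ 3), ?_⟩
  simp only [Q8, map_mul, map_pow, map_neg, map_ofNat, map_one]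
  ring

end HW8
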